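/- arXiv:2509.13354 — 2 statements merged into one kernel-verified Lean document; each statement's English description precedes it below -/
import Mathlib

section
/- Let x : ℕ → ℕ be superadditive with x(n) ≥ 1 for all n ≥ 1, let y : ℕ → ℕ satisfy y(n) ≥ 1 for all n ≥ 1, and let (B_n)_{n≥0} be the factorial set associated with (x, y). If n! divides B_n for every n ≥ 0, then the function n ↦ B_n is a generalized factorial. -/
/-- A function `f : ℕ → ℕ` is a generalized factorial if `f 0 = 1`, `f n ≥ 1` for all `n`,
`f k * f (n - k)` divides `f n` for all `0 ≤ k ≤ n`, and `n !` divides `f n` for all `n`. -/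
def IsGenFactorial (f : ℕ → ℕ) : Prop :=
  f 0 = 1 ∧ (∀ n, 1 ≤ f n) ∧ (∀ n k, k ≤ n → f k * f (n - k) ∣ f n) ∧
    (∀ n, Nat.factorial n ∣ f n)

/-!
Since `⌊m/k⌋ + ⌊n/k⌋ ≤ ⌊(m+n)/k⌋`, superadditivity of `x` (hence its monotonicity) gives
`y(k)^{x⌊m/k⌋} * y(k)^{x⌊n/k⌋} ∣ y(k)^{x⌊(m+n)/k⌋}` factor by factor, so `B_m B_n ∣ B_{m+n}`.
To compare the three products over a common index range, `x` is replaced by the function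
equal to `0` at `0`: then the factors with `k` beyond the range are `1`, and superadditivity
holds on all of `ℕ`.
-/

open Finset

def factorialSet (x y : ℕ → ℕ) (n : ℕ) : ℕ :=
  ∏ k ∈ Icc 1 n, y k ^ x (n / k)

theorem monotone_of_add_le_add {M : Type*} [AddCommMonoid M] [PartialOrder M]
    [CanonicallyOrderedAdd M] {f : ℕ → M} (hf : ∀ m n, f m + f n ≤ f (m + n)) : Monotone f :=
  monotone_nat_of_le_succ fun n => le_self_add.trans (hf n 1)

section Superadditive

variable {x : ℕ → ℕ}

theorem update_zero_add_le_add (hsuper : ∀ m n, 1 ≤ m → 1 ≤ n → x m + x n ≤ x (m + n))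
    (m n : ℕ) :
    Function.update x 0 0 m + Function.update x 0 0 n ≤ Function.update x 0 0 (m + n) := by
  rcases Nat.eq_zero_or_pos m with rfl | hm
  · simp
  rcases Nat.eq_zero_or_pos n with rfl | hn
  · simp
  simpa [Function.update_of_ne, hm.ne', hn.ne', (Nat.add_pos_left hm n).ne'] using
    hsuper m n hm hn

theorem update_zero_div_add_le_div
    (hsuper : ∀ m n, 1 ≤ m → 1 ≤ n → x m + x n ≤ x (m + n)) (m n k : ℕ) :
    Function.update x 0 0 (m / k) + Function.update x 0 0 (n / k) ≤
      Function.update x 0 0 ((m + n) / k) :=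
  (update_zero_add_le_add hsuper _ _).trans <|
    monotone_of_add_le_add (update_zero_add_le_add hsuper) Nat.div_add_div_le_add_div

end Superadditive

theorem factorialSet_eq_prod_Icc_update_zero (x y : ℕ → ℕ) {n N : ℕ} (hn : n ≤ N) :
    factorialSet x y n = ∏ k ∈ Icc 1 N, y k ^ Function.update x 0 0 (n / k) := by
  rw [factorialSet]
  refine prod_subset_one_on_sdiff (Icc_subset_Icc_right hn) ?_ ?_
  · intro k hk
    simp only [mem_sdiff, mem_Icc] at hk
    simp [Nat.div_eq_of_lt (by omega : n < k)]
  · intro k hk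
    simp only [mem_Icc] at hk
    rw [Function.update_of_ne (Nat.div_pos hk.2 (by omega)).ne']

theorem factorialSet_mul_dvd {x : ℕ → ℕ} (y : ℕ → ℕ)
    (hsuper : ∀ m n, 1 ≤ m → 1 ≤ n → x m + x n ≤ x (m + n)) (m n : ℕ) :
    factorialSet x y m * factorialSet x y n ∣ factorialSet x y (m + n) := by
  rw [factorialSet_eq_prod_Icc_update_zero x y (Nat.le_add_right m n),
    factorialSet_eq_prod_Icc_update_zero x y (Nat.le_add_left n m),
    factorialSet_eq_prod_Icc_update_zero x y le_rfl, ← prod_mul_distrib]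
  refine prod_dvd_prod_of_dvd _ _ fun k _ => ?_
  rw [← pow_add]
  exact pow_dvd_pow _ (update_zero_div_add_le_div hsuper m n k)

theorem one_le_factorialSet (x : ℕ → ℕ) {y : ℕ → ℕ} (hy : ∀ n, 1 ≤ n → 1 ≤ y n) (n : ℕ) :
    1 ≤ factorialSet x y n :=
  one_le_prod' fun k hk => Nat.one_le_pow _ _ (hy k (mem_Icc.mp hk).1)

theorem stmt_6_general (x y : ℕ → ℕ)
    (hsuper : ∀ m n, 1 ≤ m → 1 ≤ n → x m + x n ≤ x (m + n))
    (hy : ∀ n, 1 ≤ n → 1 ≤ y n)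
    (B : ℕ → ℕ) (hB : ∀ n, B n = ∏ k ∈ Finset.Icc 1 n, y k ^ x (n / k))
    (hfac : ∀ n, Nat.factorial n ∣ B n) :
    IsGenFactorial B := by
  obtain rfl : B = factorialSet x y := funext hB
  refine ⟨by simp [factorialSet], one_le_factorialSet x hy, fun n k hk => ?_, hfac⟩
  simpa [Nat.add_sub_cancel' hk] using factorialSet_mul_dvd y hsuper k (n - k)

theorem stmt_6 (x y : ℕ → ℕ)
    (hsuper : ∀ m n, 1 ≤ m → 1 ≤ n → x m + x n ≤ x (m + n))
    (hx : ∀ n, 1 ≤ n → 1 ≤ x n) (hy : ∀ n, 1 ≤ n → 1 ≤ y n)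
    (B : ℕ → ℕ) (hB : ∀ n, B n = ∏ k ∈ Finset.Icc 1 n, y k ^ x (n / k))
    (hfac : ∀ n, Nat.factorial n ∣ B n) :
    IsGenFactorial B :=
  stmt_6_general x y hsuper hy B hB hfac
end

section
/- Let β, x, y : ℕ → ℕ with β(n) ≥ 1 and y(n) ≥ 1 for all n ≥ 1, and adopt the convention x(0) = 0. Then ∏_{k=1}^{n} β(k)^{⌊n/k⌋} = ∏_{k=1}^{n} y(k)^{x(⌊n/k⌋)} holds for every n ≥ 1 if and only if for every n ≥ 1 one has ∑_{d ∣ n} log β(d) = ∑_{d ∣ n} (x(n/d) − x(n/d − 1))·log y(d). (That is, (Id, β) and (x, y) generate the same factorials if and only if 1 ⋆ Log(β) = Δx ⋆ Log(y).) -/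
/-!
Taking logarithms turns the generalized factorial `∏_{k ≤ n} y(k)^{x(⌊n/k⌋)}` into
`L(n) = ∑_{k ≤ n} x(⌊n/k⌋) log y(k)`. Since `⌊(n+1)/k⌋` exceeds `⌊n/k⌋` (by one) exactly when
`k ∣ n + 1`, the increment `L(n+1) - L(n)` is `(Δx ⋆ Log y)(n+1)`; for `x = Id` it is
`(1 ⋆ Log β)(n+1)`. Two sequences starting at `L(0) = 0` agree iff their increments agree.
-/

open Finset

/-- The paper's `n!_{(x,y)}`; the factorials of `(Id, β)` are `genFactorial id β`. -/
def genFactorial (x y : ℕ → ℕ) (n : ℕ) : ℕ := ∏ k ∈ Icc 1 n, y k ^ x (n / k)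

variable {x y : ℕ → ℕ}

@[simp]
lemma genFactorial_zero : genFactorial x y 0 = 1 := rfl

lemma genFactorial_pos (hy : ∀ n, 1 ≤ n → 1 ≤ y n) (n : ℕ) : 0 < genFactorial x y n :=
  prod_pos fun k hk ↦ pow_pos (hy k (mem_Icc.mp hk).1) _

lemma log_genFactorial (hy : ∀ n, 1 ≤ n → 1 ≤ y n) (n : ℕ) :
    Real.log (genFactorial x y n) = ∑ k ∈ Icc 1 n, (x (n / k) : ℝ) * Real.log (y k) := by
  rw [genFactorial, Nat.cast_prod, Real.log_prod]
  · simp only [Nat.cast_pow, Real.log_pow]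
  · intro k hk
    have := hy k (mem_Icc.mp hk).1
    positivity

lemma genFactorial_inj_iff_log (hy : ∀ n, 1 ≤ n → 1 ≤ y n) {x' y' : ℕ → ℕ}
    (hy' : ∀ n, 1 ≤ n → 1 ≤ y' n) (n : ℕ) :
    genFactorial x y n = genFactorial x' y' n ↔
      Real.log (genFactorial x y n) = Real.log (genFactorial x' y' n) := by
  rw [← Nat.cast_inj (R := ℝ)]
  exact (Real.log_injOn_pos.eq_iff
    (Set.mem_Ioi.mpr (by exact_mod_cast genFactorial_pos hy n))
    (Set.mem_Ioi.mpr (by exact_mod_cast genFactorial_pos hy' n))).symm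

lemma sum_Icc_div_mul_succ_sub {R : Type*} [Ring R] (g f : ℕ → R) (hg : g 0 = 0) (n : ℕ) :
    ∑ k ∈ Icc 1 (n + 1), g ((n + 1) / k) * f k - ∑ k ∈ Icc 1 n, g (n / k) * f k =
      ∑ d ∈ (n + 1).divisors, (g ((n + 1) / d) - g ((n + 1) / d - 1)) * f d := by
  have hlast : ∑ k ∈ Icc 1 n, g (n / k) * f k = ∑ k ∈ Icc 1 (n + 1), g (n / k) * f k := by
    rw [sum_Icc_succ_top (by omega), Nat.div_eq_of_lt (by omega), hg, zero_mul, add_zero]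
  have hdiv : ∀ d, d ∣ n + 1 → (n + 1) / d - 1 = n / d := fun d hd ↦ by
    rw [Nat.succ_div_of_dvd hd, Nat.add_sub_cancel]
  rw [hlast, ← sum_sub_distrib]
  refine (sum_subset (fun d hd ↦ ?_) fun k _ hk ↦ ?_).symm.trans (sum_congr rfl fun d hd ↦ ?_)
  · have := Nat.mem_divisors.mp hd
    exact mem_Icc.mpr ⟨Nat.pos_of_dvd_of_pos this.1 n.succ_pos, Nat.divisor_le hd⟩
  · have hndvd : ¬k ∣ n + 1 := fun h ↦ hk (Nat.mem_divisors.mpr ⟨h, n.succ_ne_zero⟩)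
    rw [Nat.succ_div_of_not_dvd hndvd, sub_self]
  · rw [hdiv d (Nat.dvd_of_mem_divisors hd), sub_mul]

lemma log_genFactorial_succ_sub (hx0 : x 0 = 0) (hy : ∀ n, 1 ≤ n → 1 ≤ y n) (n : ℕ) :
    Real.log (genFactorial x y (n + 1)) - Real.log (genFactorial x y n) =
      ∑ d ∈ (n + 1).divisors, ((x ((n + 1) / d) : ℝ) - x ((n + 1) / d - 1)) * Real.log (y d) := by
  rw [log_genFactorial hy, log_genFactorial hy]
  exact sum_Icc_div_mul_succ_sub (fun m ↦ (x m : ℝ)) _ (by simp [hx0]) n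

lemma log_genFactorial_id_succ_sub {β : ℕ → ℕ} (hβ : ∀ n, 1 ≤ n → 1 ≤ β n) (n : ℕ) :
    Real.log (genFactorial id β (n + 1)) - Real.log (genFactorial id β n) =
      ∑ d ∈ (n + 1).divisors, Real.log (β d) := by
  rw [log_genFactorial_succ_sub rfl hβ]
  refine sum_congr rfl fun d hd ↦ ?_
  have hquot : 1 ≤ (n + 1) / d :=
    Nat.div_pos (Nat.divisor_le hd) (Nat.pos_of_mem_divisors hd)
  rw [id, id, Nat.cast_sub hquot, Nat.cast_one, sub_sub_cancel, one_mul]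

lemma eq_iff_forall_succ_sub_eq {G : Type*} [AddGroup G] {a b : ℕ → G} (h0 : a 0 = b 0) :
    a = b ↔ ∀ n, a (n + 1) - a n = b (n + 1) - b n := by
  refine ⟨fun h n ↦ by rw [h], fun h ↦ funext fun n ↦ ?_⟩
  induction n with
  | zero => exact h0
  | succ n ih => exact sub_left_injective (show a (n + 1) - a n = b (n + 1) - a n by rw [h, ih])

lemma forall_one_le_iff_forall_succ {P : ℕ → Prop} : (∀ n, 1 ≤ n → P n) ↔ ∀ n, P (n + 1) :=
  ⟨fun h n ↦ h _ n.succ_pos, fun h _ hn ↦ Nat.succ_pred_eq_of_pos hn ▸ h _⟩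

theorem stmt_14 (β x y : ℕ → ℕ)
    (hβ : ∀ n, 1 ≤ n → 1 ≤ β n) (hy : ∀ n, 1 ≤ n → 1 ≤ y n)
    (hx0 : x 0 = 0) :
    (∀ n, 1 ≤ n →
        ∏ k ∈ Finset.Icc 1 n, β k ^ (n / k) =
          ∏ k ∈ Finset.Icc 1 n, y k ^ x (n / k)) ↔
      (∀ n, 1 ≤ n →
        ∑ d ∈ n.divisors, Real.log (β d) =
          ∑ d ∈ n.divisors, (((x (n / d) : ℤ) - (x (n / d - 1) : ℤ) : ℤ) : ℝ) *
            Real.log (y d)) := by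
  set L₁ : ℕ → ℝ := fun n ↦ Real.log (genFactorial id β n)
  set L₂ : ℕ → ℝ := fun n ↦ Real.log (genFactorial x y n)
  rw [forall_one_le_iff_forall_succ, forall_one_le_iff_forall_succ]
  calc (∀ n, genFactorial id β (n + 1) = genFactorial x y (n + 1))
      ↔ ∀ n, L₁ (n + 1) = L₂ (n + 1) :=
        forall_congr' fun n ↦ genFactorial_inj_iff_log (x := id) (x' := x) hβ hy (n + 1)
    _ ↔ L₁ = L₂ :=
      ⟨fun h ↦ funext <| Nat.and_forall_add_one.mp ⟨by simp [L₁, L₂], h⟩, fun h _ ↦ congrFun h _⟩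
    _ ↔ ∀ n, L₁ (n + 1) - L₁ n = L₂ (n + 1) - L₂ n := eq_iff_forall_succ_sub_eq (by simp [L₁, L₂])
    _ ↔ _ := by
      simp only [L₁, L₂, log_genFactorial_id_succ_sub hβ, log_genFactorial_succ_sub hx0 hy,
        Int.cast_sub, Int.cast_natCast]
end
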